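/- arXiv:1803.06341 — 2 statements merged into one kernel-verified Lean document; each statement's English description precedes it below -/
import Mathlib

section
/- Let H be a history satisfying uniqueness of written values, containing a transaction WOT whose write events are exactly w(X)x and w(Y)y for two distinct objects X and Y. Suppose a transaction ROT in the local history of a client C_r contains the read events r(X)a and r(Y)y, i.e., ROT returns WOT's value y for object Y. Then in every transactional causal serialization for C_r of H: WOT strictly precedes ROT in the serialization order, the value a is not ⊥, and the last transaction strictly preceding ROT that contains a write event on X either equals WOT or strictly follows WOT in the serialization order. -/
/-!
Combinatorial model of transactional histories.
-/

/-- A transaction: a finite set of read events `(x, v)` (read of object `x`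
returning value `v`) and a finite set of write events `(x, v)` (write of
value `v` to object `x`). -/
structure Tx (Obj : Type*) (Val : Type*) where
  reads : Set (Obj × Val)
  writes : Set (Obj × Val)
  reads_finite : reads.Finite
  writes_finite : writes.Finite

/-- A history: a set of clients, each with a finite sequence (list) of
transactions — its local history. -/
structure History (Client : Type*) (Obj : Type*) (Val : Type*) where
  locals : Client → List (Tx Obj Val)

variable {Client Obj Val : Type*}

/-- `T` is a transaction of the history `H`. -/
def TxIn (H : History Client Obj Val) (T : Tx Obj Val) : Prop :=
  ∃ c : Client, T ∈ H.locals c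

/-- `S` occurs strictly before `T` in the local history of client `c`. -/
def LocBefore (H : History Client Obj Val) (c : Client) (S T : Tx Obj Val) : Prop :=
  ∃ i j : ℕ, i < j ∧ (H.locals c)[i]? = some S ∧ (H.locals c)[j]? = some T

/-- `T` contains a write event on object `x`. -/
def WritesOn (T : Tx Obj Val) (x : Obj) : Prop :=
  ∃ v : Val, (x, v) ∈ T.writes

/-- Uniqueness of written values: every value written by a write event of the
history is distinct from `bot` and from the value written by every other
write event in the history. -/
def UniqueWrites (H : History Client Obj Val) (bot : Val) : Prop :=
  (∀ T, TxIn H T → ∀ x v, (x, v) ∈ T.writes → v ≠ bot) ∧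
  (∀ T T', TxIn H T → TxIn H T' → ∀ x x' v,
      (x, v) ∈ T.writes → (x', v) ∈ T'.writes → T = T' ∧ x = x')

/-- The causality relation of a history: the smallest transitive relation such
that `S` causally precedes `T` whenever (i) `S` occurs strictly before `T` in
some client's local history, or (ii) `S` contains a write event `w(x)v` and
`T` contains the read event `r(x)v`. -/
inductive Causal (H : History Client Obj Val) : Tx Obj Val → Tx Obj Val → Prop
  | prog {S T : Tx Obj Val} (c : Client) : LocBefore H c S T → Causal H S T
  | readFrom {S T : Tx Obj Val} {x : Obj} {v : Val} :
      TxIn H S → TxIn H T → (x, v) ∈ S.writes → (x, v) ∈ T.reads → Causal H S T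
  | trans {S T U : Tx Obj Val} : Causal H S T → Causal H T U → Causal H S U

/-- The set of transactions over which a serialization for client `C` ranges:
all transactions of the history containing at least one write event, together
with all transactions of `C`'s local history. -/
def Dom (H : History Client Obj Val) (C : Client) : Set (Tx Obj Val) :=
  {T | (TxIn H T ∧ T.writes.Nonempty) ∨ T ∈ H.locals C}

/-- `lt` is a transactional causal serialization for client `C` of history `H`:
a strict linear order on `Dom H C` such that
(1) for every read event `r(x)v` with `v ≠ bot` in a transaction `T` of the
set, some transaction strictly preceding `T` contains a write event on `x`,
and the last such transaction contains the write event `w(x)v`;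
(2) for every read event `r(x)bot` in a transaction `T` of the set, no
transaction strictly preceding `T` contains a write event on `x`;
(3) whenever a transaction `S` of the set causally precedes a transaction `T`
of the set, `S` strictly precedes `T`. -/
structure IsCausalSerialization (H : History Client Obj Val) (bot : Val)
    (C : Client) (lt : Tx Obj Val → Tx Obj Val → Prop) : Prop where
  irrefl : ∀ T ∈ Dom H C, ¬ lt T T
  trans : ∀ S ∈ Dom H C, ∀ T ∈ Dom H C, ∀ U ∈ Dom H C, lt S T → lt T U → lt S U
  total : ∀ S ∈ Dom H C, ∀ T ∈ Dom H C, S ≠ T → lt S T ∨ lt T S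
  read_val : ∀ T ∈ Dom H C, ∀ x v, (x, v) ∈ T.reads → v ≠ bot →
      ∃ W ∈ Dom H C, lt W T ∧ (x, v) ∈ W.writes ∧
        ∀ W' ∈ Dom H C, lt W' T → WritesOn W' x → W' = W ∨ lt W' W
  read_bot : ∀ T ∈ Dom H C, ∀ x, (x, bot) ∈ T.reads →
      ∀ W ∈ Dom H C, lt W T → ¬ WritesOn W x
  causal_lt : ∀ S ∈ Dom H C, ∀ T ∈ Dom H C, Causal H S T → lt S T

lemma mem_Dom_of_writes {H : History Client Obj Val} {C : Client} {T : Tx Obj Val}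
    (hT : TxIn H T) {x : Obj} {v : Val} (hw : (x, v) ∈ T.writes) : T ∈ Dom H C :=
  Or.inl ⟨hT, ⟨(x, v), hw⟩⟩

lemma mem_Dom_of_mem_locals {H : History Client Obj Val} {C : Client} {T : Tx Obj Val}
    (hT : T ∈ H.locals C) : T ∈ Dom H C :=
  Or.inr hT

namespace IsCausalSerialization

variable {H : History Client Obj Val} {bot : Val} {C : Client}
  {lt : Tx Obj Val → Tx Obj Val → Prop}

lemma lt_of_readFrom (hser : IsCausalSerialization H bot C lt) {W T : Tx Obj Val}
    (hW : TxIn H W) (hT : T ∈ H.locals C) {x : Obj} {v : Val}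
    (hw : (x, v) ∈ W.writes) (hr : (x, v) ∈ T.reads) : lt W T :=
  hser.causal_lt W (mem_Dom_of_writes hW hw) T (mem_Dom_of_mem_locals hT)
    (Causal.readFrom hW ⟨C, hT⟩ hw hr)

lemma ne_bot_of_lt_writesOn (hser : IsCausalSerialization H bot C lt) {W T : Tx Obj Val}
    (hWd : W ∈ Dom H C) (hTd : T ∈ Dom H C) (hlt : lt W T) {x : Obj} (hWx : WritesOn W x)
    {v : Val} (hr : (x, v) ∈ T.reads) : v ≠ bot := by
  rintro rfl
  exact hser.read_bot T hTd x hr W hWd hlt hWx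

end IsCausalSerialization

theorem stmt_1_general {Client Obj Val : Type*} (bot : Val)
    (H : History Client Obj Val)
    (WOT : Tx Obj Val) (hWOT : TxIn H WOT)
    (X Y : Obj) (x y : Val)
    (hw : WOT.writes = {(X, x), (Y, y)})
    (Cr : Client) (ROT : Tx Obj Val) (hROT : ROT ∈ H.locals Cr)
    (a : Val)
    (hra : (X, a) ∈ ROT.reads) (hry : (Y, y) ∈ ROT.reads)
    (lt : Tx Obj Val → Tx Obj Val → Prop)
    (hser : IsCausalSerialization H bot Cr lt) :
    lt WOT ROT ∧ a ≠ bot ∧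
      ∀ W ∈ Dom H Cr, lt W ROT → WritesOn W X →
        (∀ W' ∈ Dom H Cr, lt W' ROT → WritesOn W' X → W' = W ∨ lt W' W) →
        (W = WOT ∨ lt WOT W) := by
  have hwX : (X, x) ∈ WOT.writes := by simp [hw]
  have hwY : (Y, y) ∈ WOT.writes := by simp [hw]
  have hWd : WOT ∈ Dom H Cr := mem_Dom_of_writes hWOT hwX
  have hlt : lt WOT ROT := hser.lt_of_readFrom hWOT hROT hwY hry
  have ha : a ≠ bot :=
    hser.ne_bot_of_lt_writesOn hWd (mem_Dom_of_mem_locals hROT) hlt ⟨x, hwX⟩ hra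
  refine ⟨hlt, ha, fun W _ _ _ hlast => ?_⟩
  exact (hlast WOT hWd hlt ⟨x, hwX⟩).imp Eq.symm id

/-- if `ROT` returns `WOT`'s value `y` for `Y`, then `WOT`
precedes `ROT` in every serialization for `C_r`, the value `a` read for `X`
is not `⊥`, and the last transaction preceding `ROT` writing on `X` is `WOT`
or follows `WOT`. -/
theorem stmt_1 {Client Obj Val : Type*} (bot : Val)
    (H : History Client Obj Val) (hU : UniqueWrites H bot)
    (WOT : Tx Obj Val) (hWOT : TxIn H WOT)
    (X Y : Obj) (x y : Val) (hXY : X ≠ Y)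
    (hw : WOT.writes = {(X, x), (Y, y)})
    (Cr : Client) (ROT : Tx Obj Val) (hROT : ROT ∈ H.locals Cr)
    (a : Val)
    (hra : (X, a) ∈ ROT.reads) (hry : (Y, y) ∈ ROT.reads)
    (lt : Tx Obj Val → Tx Obj Val → Prop)
    (hser : IsCausalSerialization H bot Cr lt) :
    lt WOT ROT ∧ a ≠ bot ∧
      ∀ W ∈ Dom H Cr, lt W ROT → WritesOn W X →
        (∀ W' ∈ Dom H Cr, lt W' ROT → WritesOn W' X → W' = W ∨ lt W' W) →
        (W = WOT ∨ lt WOT W) :=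
  stmt_1_general bot H WOT hWOT X Y x y hw Cr ROT hROT a hra hry lt hser
end

section
/- Let H be a history satisfying uniqueness of written values. Suppose the local history of a client C contains a transaction W_x whose only event is the write w(X)x, and strictly later a transaction W_y whose only event is the write w(Y)y, where X and Y are distinct objects (so W_x causally precedes W_y). Suppose H also contains a transaction W* containing a write event w(X)x* with x* ≠ x. Suppose the local history of a client C_r contains a transaction ROT with read events r(X)x* and r(Y)y, and strictly later a transaction ROT1 with read events r(X)x and r(Y)y. Then there exists no transactional causal serialization for C_r of H. -/
variable {Client Obj Val : Type*}

/-!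
Causality (through `w(Y)y`, which `ROT` reads) forces `w(X)x` before `ROT`. By uniqueness of
written values `W*` is the last write on `X` before `ROT`, so it is serialized between `w(X)x`
and `ROT`, hence before `ROT1`. But `ROT1` reads `x`,
so `w(X)x` must be the last write on `X` before `ROT1`: a contradiction.
-/

variable {H : History Client Obj Val}

namespace LocBefore

variable {c : Client} {S T : Tx Obj Val}

theorem mem_left (h : LocBefore H c S T) : S ∈ H.locals c := by
  obtain ⟨i, -, -, hi, -⟩ := h
  exact List.mem_of_getElem? hi

theorem mem_right (h : LocBefore H c S T) : T ∈ H.locals c := by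
  obtain ⟨-, j, -, -, hj⟩ := h
  exact List.mem_of_getElem? hj

end LocBefore

theorem mem_dom_of_mem_writes {C : Client} {T : Tx Obj Val} {x : Obj} {v : Val}
    (hT : TxIn H T) (hw : (x, v) ∈ T.writes) : T ∈ Dom H C :=
  Or.inl ⟨hT, _, hw⟩

theorem txIn_of_mem_dom {C : Client} {T : Tx Obj Val} (hT : T ∈ Dom H C) : TxIn H T :=
  hT.elim (·.1) (⟨C, ·⟩)

namespace IsCausalSerialization

variable {bot : Val} {C : Client} {lt : Tx Obj Val → Tx Obj Val → Prop}
  (hS : IsCausalSerialization H bot C lt) (hU : UniqueWrites H bot)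
  {T W : Tx Obj Val} {x : Obj} {v : Val}
include hS hU

theorem lastWriter_of_reads (hT : T ∈ Dom H C) (hr : (x, v) ∈ T.reads) (hv : v ≠ bot)
    (hW : W ∈ Dom H C) (hw : (x, v) ∈ W.writes) :
    lt W T ∧ ∀ W' ∈ Dom H C, lt W' T → WritesOn W' x → W' = W ∨ lt W' W := by
  obtain ⟨W₀, hW₀, hlt, hw₀, hlast⟩ := hS.read_val T hT x v hr hv
  obtain rfl : W₀ = W :=
    (hU.2 W₀ W (txIn_of_mem_dom hW₀) (txIn_of_mem_dom hW) x x v hw₀ hw).1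
  exact ⟨hlt, hlast⟩

theorem not_lt_lt_of_reads (hT : T ∈ Dom H C) (hr : (x, v) ∈ T.reads) (hv : v ≠ bot)
    (hW : W ∈ Dom H C) (hw : (x, v) ∈ W.writes) {W' : Tx Obj Val} (hW' : W' ∈ Dom H C)
    (hW'x : WritesOn W' x) (hWW' : lt W W') (hW'T : lt W' T) : False := by
  rcases (hS.lastWriter_of_reads hU hT hr hv hW hw).2 W' hW' hW'T hW'x with hW'W | hW'W
  · exact hS.irrefl W hW (hW'W ▸ hWW')
  · exact hS.irrefl W hW (hS.trans W hW W' hW' W hW hWW' hW'W)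

end IsCausalSerialization

theorem stmt_2_general {Client Obj Val : Type*} (bot : Val)
    (H : History Client Obj Val) (hU : UniqueWrites H bot)
    (C : Client) (Wx Wy : Tx Obj Val)
    (X Y : Obj) (x y : Val)
    (hWxw : Wx.writes = {(X, x)})
    (hWyw : Wy.writes = {(Y, y)})
    (hC : LocBefore H C Wx Wy)
    (Wstar : Tx Obj Val) (hWstar : TxIn H Wstar)
    (xstar : Val) (hws : (X, xstar) ∈ Wstar.writes) (hxs : xstar ≠ x)
    (Cr : Client) (ROT ROT1 : Tx Obj Val)
    (hord : LocBefore H Cr ROT ROT1)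
    (hrs : (X, xstar) ∈ ROT.reads) (hry : (Y, y) ∈ ROT.reads)
    (hr1x : (X, x) ∈ ROT1.reads) :
    ¬ ∃ lt : Tx Obj Val → Tx Obj Val → Prop,
        IsCausalSerialization H bot Cr lt := by
  rintro ⟨lt, hS⟩
  have hwx : (X, x) ∈ Wx.writes := hWxw ▸ rfl
  have hwy : (Y, y) ∈ Wy.writes := hWyw ▸ rfl
  have hWxIn : TxIn H Wx := ⟨C, hC.mem_left⟩
  have hWxD : Wx ∈ Dom H Cr := mem_dom_of_mem_writes hWxIn hwx
  have hWstarD : Wstar ∈ Dom H Cr := mem_dom_of_mem_writes hWstar hws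
  have hROTD : ROT ∈ Dom H Cr := Or.inr hord.mem_left
  have hROT1D : ROT1 ∈ Dom H Cr := Or.inr hord.mem_right
  have hWxROT : lt Wx ROT := hS.causal_lt Wx hWxD ROT hROTD <|
    .trans (.prog C hC) (.readFrom ⟨C, hC.mem_right⟩ ⟨Cr, hord.mem_left⟩ hwy hry)
  have hWxWstar : Wx ≠ Wstar := by
    rintro rfl
    rw [hWxw, Set.mem_singleton_iff, Prod.mk.injEq] at hws
    exact hxs hws.2
  obtain ⟨hWstarROT, hlast⟩ :=
    hS.lastWriter_of_reads hU hROTD hrs (hU.1 Wstar hWstar X xstar hws) hWstarD hws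
  have hWxltWstar : lt Wx Wstar := (hlast Wx hWxD hWxROT ⟨x, hwx⟩).resolve_left hWxWstar
  have hWstarROT1 : lt Wstar ROT1 := hS.trans Wstar hWstarD ROT hROTD ROT1 hROT1D hWstarROT
    (hS.causal_lt ROT hROTD ROT1 hROT1D (.prog Cr hord))
  exact hS.not_lt_lt_of_reads hU hROT1D hr1x (hU.1 Wx hWxIn X x hwx) hWxD hwx hWstarD
    ⟨xstar, hws⟩ hWxltWstar hWstarROT1

/-- if `ROT` returns a stale value `x* ≠ x` for `X` together with
`y` for `Y` (where `w(X)x` causally precedes `w(Y)y`), and a later `ROT1`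
returns `(x, y)`, then no transactional causal serialization for `C_r`
exists. -/
theorem stmt_2 {Client Obj Val : Type*} (bot : Val)
    (H : History Client Obj Val) (hU : UniqueWrites H bot)
    (C : Client) (Wx Wy : Tx Obj Val)
    (X Y : Obj) (x y : Val) (hXY : X ≠ Y)
    (hWxr : Wx.reads = ∅) (hWxw : Wx.writes = {(X, x)})
    (hWyr : Wy.reads = ∅) (hWyw : Wy.writes = {(Y, y)})
    (hC : LocBefore H C Wx Wy)
    (Wstar : Tx Obj Val) (hWstar : TxIn H Wstar)
    (xstar : Val) (hws : (X, xstar) ∈ Wstar.writes) (hxs : xstar ≠ x)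
    (Cr : Client) (ROT ROT1 : Tx Obj Val)
    (hord : LocBefore H Cr ROT ROT1)
    (hrs : (X, xstar) ∈ ROT.reads) (hry : (Y, y) ∈ ROT.reads)
    (hr1x : (X, x) ∈ ROT1.reads) (hr1y : (Y, y) ∈ ROT1.reads) :
    ¬ ∃ lt : Tx Obj Val → Tx Obj Val → Prop,
        IsCausalSerialization H bot Cr lt :=
  stmt_2_general bot H hU C Wx Wy X Y x y hWxw hWyw hC Wstar hWstar xstar hws hxs Cr ROT ROT1 hord
    hrs hry hr1x
end
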